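/- arXiv:0711.0694 — 2 statements merged into one kernel-verified Lean document; each statement's English description precedes it below -/
import Mathlib

section
/- Stopping condition for Exact Value Iteration: run Value Iteration with no error, i.e. v_{k+1} = T v_k. If at some iteration k₀ the difference between two subsequent iterates satisfies spn_∞(v_{k₀+1} − v_{k₀}) < ((1−γ)/γ)·ε, then the greedy policy π_{k₀+1} with respect to v_{k₀} is ε-optimal: ‖v_* − v^{π_{k₀+1}}‖_∞ < ε. -/
open Matrix Filter Finset

section MDPDefs

variable {X : Type*} {A : Type*} [Fintype X] [Nonempty X] [DecidableEq X]
  [Fintype A] [Nonempty A]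

/-- Transition matrix of a policy: `P^π i j = p i (π i) j`. -/
noncomputable def Pmat (p : X → A → X → ℝ) (π : X → A) : Matrix X X ℝ :=
  Matrix.of fun i j => p i (π i) j

/-- Expected reward vector of a policy. -/
noncomputable def rvec (p : X → A → X → ℝ) (r : X → A → X → ℝ) (π : X → A) : X → ℝ :=
  fun i => ∑ j, p i (π i) j * r i (π i) j

/-- The Bellman operator of a policy: `T^π v = r^π + γ P^π v`. -/
noncomputable def Tpol (p : X → A → X → ℝ) (r : X → A → X → ℝ) (γ : ℝ)
    (π : X → A) (v : X → ℝ) : X → ℝ :=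
  rvec p r π + γ • (Pmat p π).mulVec v

/-- The optimal Bellman operator: `(T v) i = max_a Σ_j p i a j (r i a j + γ v j)`. -/
noncomputable def Topt (p : X → A → X → ℝ) (r : X → A → X → ℝ) (γ : ℝ)
    (v : X → ℝ) : X → ℝ :=
  fun i => Finset.univ.sup' Finset.univ_nonempty
    (fun a => ∑ j, p i a j * (r i a j + γ * v j))

/-- A policy is greedy with respect to `v` when `T^π v = T v`. -/
def Greedy (p : X → A → X → ℝ) (r : X → A → X → ℝ) (γ : ℝ)
    (π : X → A) (v : X → ℝ) : Prop :=
  Tpol p r γ π v = Topt p r γ v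

/-- The value of a policy: `v^π = (I - γ P^π)⁻¹ r^π`. -/
noncomputable def vpi (p : X → A → X → ℝ) (r : X → A → X → ℝ) (γ : ℝ)
    (π : X → A) : X → ℝ :=
  ((1 : Matrix X X ℝ) - γ • Pmat p π)⁻¹.mulVec (rvec p r π)

/-- The λ policy iteration update operator
`T_λ^π v = (I - λγ P^π)⁻¹ (r^π + (1-λ)γ P^π v)`. -/
noncomputable def Tlam (p : X → A → X → ℝ) (r : X → A → X → ℝ) (γ lam : ℝ)
    (π : X → A) (v : X → ℝ) : X → ℝ :=
  ((1 : Matrix X X ℝ) - (lam * γ) • Pmat p π)⁻¹.mulVec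
    (rvec p r π + ((1 - lam) * γ) • (Pmat p π).mulVec v)

/-- A stochastic matrix: nonnegative entries, all row sums equal to one. -/
def IsStochastic (M : Matrix X X ℝ) : Prop :=
  (∀ i j, 0 ≤ M i j) ∧ ∀ i, ∑ j, M i j = 1

/-- A probability distribution on `X`. -/
def IsDistribution (μ : X → ℝ) : Prop :=
  (∀ x, 0 ≤ μ x) ∧ ∑ x, μ x = 1

/-- Weighted L_p norm `‖u‖_{p,μ} = (Σ_x μ x |u x|^p)^(1/p)`. -/
noncomputable def wLpNorm (pp : ℝ) (μ : X → ℝ) (u : X → ℝ) : ℝ :=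
  (∑ x, μ x * |u x| ^ pp) ^ (1 / pp)

/-- Max norm `‖u‖_∞ = max_x |u x|`. -/
noncomputable def linfNorm (u : X → ℝ) : ℝ :=
  Finset.univ.sup' Finset.univ_nonempty fun x => |u x|

/-- Span seminorm `spn_∞ u = max_x u x - min_x u x`. -/
noncomputable def spanInf (u : X → ℝ) : ℝ :=
  (Finset.univ.sup' Finset.univ_nonempty u) - (Finset.univ.inf' Finset.univ_nonempty u)

/-- Span seminorm `spn_{p,μ} u = 2 min_a ‖u - a e‖_{p,μ}`. -/
noncomputable def spanLp (pp : ℝ) (μ : X → ℝ) (u : X → ℝ) : ℝ :=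
  2 * ⨅ a : ℝ, wLpNorm pp μ (fun x => u x - a)

/-- Componentwise limsup of a sequence of vectors. -/
noncomputable def limsupVec (f : ℕ → X → ℝ) : X → ℝ :=
  fun x => Filter.atTop.limsup fun k => f k x

/-- The product `M k * M (k-1) * ⋯ * M (j+1)` (identity when `k ≤ j`). -/
noncomputable def descProd (M : ℕ → Matrix X X ℝ) (j k : ℕ) : Matrix X X ℝ :=
  ((List.range (k - j)).map fun t => M (k - t)).prod

/-- The mixture distribution `½ μ (M + M')` (as a row vector pushed through matrices). -/
noncomputable def mixDist (μ : X → ℝ) (M M' : Matrix X X ℝ) : X → ℝ :=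
  Matrix.vecMul μ (((1 : ℝ) / 2) • (M + M'))

/-- Concentration coefficient `C(ν) = max_{i,a,j} p i a j / ν j`. -/
noncomputable def concCoef (p : X → A → X → ℝ) (ν : X → ℝ) : ℝ :=
  Finset.univ.sup' Finset.univ_nonempty
    (fun x : X × A × X => p x.1 x.2.1 x.2.2 / ν x.2.2)

/-- `β = (1-λ)γ/(1-λγ)`. -/
noncomputable def betaF (γ lam : ℝ) : ℝ := (1 - lam) * γ / (1 - lam * γ)

/-- `A_k = (1-λγ)(I - λγ P_k)⁻¹ P_k`. -/
noncomputable def Amat (p : X → A → X → ℝ) (γ lam : ℝ) (π : X → A) : Matrix X X ℝ :=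
  (1 - lam * γ) • (((1 : Matrix X X ℝ) - (lam * γ) • Pmat p π)⁻¹ * Pmat p π)

/-- `B_{jk}` (also `E'_{k k₀}` with `k₀ = j`). -/
noncomputable def Bmat (p : X → A → X → ℝ) (γ lam : ℝ) (π : ℕ → X → A) (πs : X → A)
    (j k : ℕ) : Matrix X X ℝ :=
  ((1 - γ) / γ ^ (k - j)) • (
    (lam * γ / (1 - lam * γ)) •
      (∑ i ∈ Finset.Ico j k, (γ ^ (k - 1 - i) * betaF γ lam ^ (i - j)) •
        ((Pmat p πs) ^ (k - 1 - i) * descProd (fun l => Amat p γ lam (π l)) j (i + 1)))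
    + (betaF γ lam ^ (k - j)) •
      (((1 : Matrix X X ℝ) - γ • Pmat p (π k))⁻¹ *
        descProd (fun l => Amat p γ lam (π l)) j k))

/-- `B'_{jk} = γ B_{jk} P_j + (1-γ)(P_*)^{k-j}`. -/
noncomputable def Bmat' (p : X → A → X → ℝ) (γ lam : ℝ) (π : ℕ → X → A) (πs : X → A)
    (j k : ℕ) : Matrix X X ℝ :=
  γ • (Bmat p γ lam π πs j k * Pmat p (π j)) + (1 - γ) • (Pmat p πs) ^ (k - j)

/-- `E_{k k₀} = (1-γ)(P_*)^{k-k₀}(I-γP_*)⁻¹`. -/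
noncomputable def Emat (p : X → A → X → ℝ) (γ : ℝ) (πs : X → A) (k0 k : ℕ) :
    Matrix X X ℝ :=
  (1 - γ) • ((Pmat p πs) ^ (k - k0) * ((1 : Matrix X X ℝ) - γ • Pmat p πs)⁻¹)

/-- `F_{k k₀} = (1-γ)(P_*)^{k-k₀} + γ E'_{k k₀} P_*`. -/
noncomputable def Fmat (p : X → A → X → ℝ) (γ lam : ℝ) (π : ℕ → X → A) (πs : X → A)
    (k0 k : ℕ) : Matrix X X ℝ :=
  (1 - γ) • (Pmat p πs) ^ (k - k0) + γ • (Bmat p γ lam π πs k0 k * Pmat p πs)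

/-- `(1-γ)²(I-γP_{πs})⁻¹ (P_{πa} (I-γP_{πb})⁻¹)`; this gives `C_k` and `C'_k`. -/
noncomputable def Cmat (p : X → A → X → ℝ) (γ : ℝ) (πs πa πb : X → A) :
    Matrix X X ℝ :=
  (1 - γ) ^ 2 • (((1 : Matrix X X ℝ) - γ • Pmat p πs)⁻¹ *
    (Pmat p πa * ((1 : Matrix X X ℝ) - γ • Pmat p πb)⁻¹))

/-- `D = (1-γ) P (I-γP)⁻¹`. -/
noncomputable def Dmat (p : X → A → X → ℝ) (γ : ℝ) (π : X → A) : Matrix X X ℝ :=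
  (1 - γ) • (Pmat p π * ((1 : Matrix X X ℝ) - γ • Pmat p π)⁻¹)

end MDPDefs

/-!
Write `u = v k₀`, `π` for the greedy policy and `δ = T u - u`. Since
`T` and `T^π` are `γ`-contractions for the sup order and `T v_* = v_*`, `T^π v^π = v^π`,
`T^π u = T u`, one gets `max (v_* - u) ≤ max δ / (1 - γ)` and `max (u - v^π) ≤ -min δ / (1 - γ)`,
and then `v_* - v^π = (T v_* - T u) + (T^π u - T^π v^π) ≤ γ spn_∞ δ / (1 - γ) < ε`.
On the other side `v^π ≤ v_*`, because `T^π v_* ≤ T v_* = v_*`.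
-/

section SupBounds

variable {X : Type*} [Fintype X] [Nonempty X]

lemma sum_mul_le_sup' {c : X → ℝ} (hc0 : ∀ j, 0 ≤ c j) (hc1 : ∑ j, c j = 1) (u : X → ℝ) :
    ∑ j, c j * u j ≤ univ.sup' univ_nonempty u :=
  calc ∑ j, c j * u j ≤ ∑ j, c j * univ.sup' univ_nonempty u :=
        sum_le_sum fun j _ => mul_le_mul_of_nonneg_left (le_sup' u (mem_univ j)) (hc0 j)
    _ = univ.sup' univ_nonempty u := by rw [← sum_mul, hc1, one_mul]

lemma abs_sum_mul_le_sup'_abs {c : X → ℝ} (hc0 : ∀ j, 0 ≤ c j) (hc1 : ∑ j, c j = 1)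
    (u : X → ℝ) : |∑ j, c j * u j| ≤ univ.sup' univ_nonempty fun j => |u j| := by
  have hneg : -∑ j, c j * u j = ∑ j, c j * -u j := by simp [← sum_neg_distrib]
  refine abs_le.mpr ⟨?_, ?_⟩
  · have := (sum_mul_le_sup' hc0 hc1 fun j => -u j).trans
      (sup'_mono_fun fun j _ => neg_le_abs (u j))
    linarith
  · exact (sum_mul_le_sup' hc0 hc1 u).trans (sup'_mono_fun fun j _ => le_abs_self (u j))

lemma sup'_le_div_one_sub_of_le {γ c : ℝ} (hγ1 : γ < 1) {u : X → ℝ}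
    (h : ∀ i, u i ≤ γ * univ.sup' univ_nonempty u + c) :
    univ.sup' univ_nonempty u ≤ c / (1 - γ) := by
  have hM : univ.sup' univ_nonempty u ≤ γ * univ.sup' univ_nonempty u + c :=
    sup'_le _ _ fun i _ => h i
  rw [le_div_iff₀ (sub_pos.mpr hγ1)]
  linarith

lemma spanInf_nonneg (u : X → ℝ) : 0 ≤ spanInf u := by
  obtain ⟨x⟩ := ‹Nonempty X›
  exact sub_nonneg.mpr ((inf'_le u (mem_univ x)).trans (le_sup' u (mem_univ x)))

end SupBounds

section Bellman

variable {X A : Type*} [Fintype X] (p : X → A → X → ℝ) (r : X → A → X → ℝ) (γ : ℝ)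

lemma Pmat_mulVec_apply (π : X → A) (u : X → ℝ) (i : X) :
    (Pmat p π *ᵥ u) i = ∑ j, p i (π i) j * u j := rfl

lemma Tpol_apply (π : X → A) (u : X → ℝ) (i : X) :
    Tpol p r γ π u i = ∑ j, p i (π i) j * (r i (π i) j + γ * u j) := by
  simp only [Tpol, rvec, Pi.add_apply, Pi.smul_apply, smul_eq_mul, Pmat_mulVec_apply,
    mul_sum, ← sum_add_distrib]
  exact sum_congr rfl fun j _ => by ring

lemma Tpol_sub_Tpol (π : X → A) (u u' : X → ℝ) (i : X) :
    Tpol p r γ π u i - Tpol p r γ π u' i = γ * ∑ j, p i (π i) j * (u j - u' j) := by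
  simp only [Tpol_apply, mul_sum, ← sum_sub_distrib]
  exact sum_congr rfl fun j _ => by ring

lemma Tpol_le_Topt [Fintype A] [Nonempty A] (π : X → A) (u : X → ℝ) (i : X) :
    Tpol p r γ π u i ≤ Topt p r γ u i := by
  rw [Tpol_apply]
  exact le_sup' (fun a => ∑ j, p i a j * (r i a j + γ * u j)) (mem_univ (π i))

variable [Nonempty X] {p γ}

lemma Tpol_sub_le (hp0 : ∀ i a j, 0 ≤ p i a j) (hp1 : ∀ i a, ∑ j, p i a j = 1)
    (hγ0 : 0 ≤ γ) (π : X → A) (u u' : X → ℝ) (i : X) :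
    Tpol p r γ π u i - Tpol p r γ π u' i ≤ γ * univ.sup' univ_nonempty (u - u') := by
  rw [Tpol_sub_Tpol]
  exact mul_le_mul_of_nonneg_left
    (sum_mul_le_sup' (hp0 i (π i)) (hp1 i (π i)) (u - u')) hγ0

lemma Topt_sub_le [Fintype A] [Nonempty A] (hp0 : ∀ i a j, 0 ≤ p i a j)
    (hp1 : ∀ i a, ∑ j, p i a j = 1) (hγ0 : 0 ≤ γ) (u u' : X → ℝ) (i : X) :
    Topt p r γ u i - Topt p r γ u' i ≤ γ * univ.sup' univ_nonempty (u - u') := by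
  obtain ⟨a, -, ha⟩ := exists_mem_eq_sup' univ_nonempty
    (fun a => ∑ j, p i a j * (r i a j + γ * u j))
  have hu : Topt p r γ u i = Tpol p r γ (fun _ => a) u i := by rw [Tpol_apply]; exact ha
  linarith [Tpol_sub_le r hp0 hp1 hγ0 (fun _ => a) u u' i,
    Tpol_le_Topt p r γ (fun _ => a) u' i]

end Bellman

section PolicyValue

variable {X A : Type*} [Fintype X] [Nonempty X] [DecidableEq X] {p : X → A → X → ℝ}
  (r : X → A → X → ℝ) {γ : ℝ}

/-- `z = γ P^π z` forces `‖z‖_∞ ≤ |γ| ‖z‖_∞`, hence `z = 0`. -/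
lemma isUnit_one_sub_smul_Pmat (hp0 : ∀ i a j, 0 ≤ p i a j) (hp1 : ∀ i a, ∑ j, p i a j = 1)
    (hγ : |γ| < 1) (π : X → A) : IsUnit ((1 : Matrix X X ℝ) - γ • Pmat p π) := by
  refine Matrix.mulVec_injective_iff_isUnit.mp fun x y hxy => ?_
  set z := x - y
  have hz : z = γ • (Pmat p π *ᵥ z) := by
    have : ((1 : Matrix X X ℝ) - γ • Pmat p π) *ᵥ z = 0 := by
      rw [Matrix.mulVec_sub, hxy, sub_self]
    rwa [Matrix.sub_mulVec, Matrix.one_mulVec, Matrix.smul_mulVec, sub_eq_zero] at this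
  have hbound : ∀ i, |z i| ≤ |γ| * univ.sup' univ_nonempty (fun j => |z j|) + 0 := by
    intro i
    rw [add_zero, congrFun hz i, Pi.smul_apply, smul_eq_mul, abs_mul, Pmat_mulVec_apply]
    exact mul_le_mul_of_nonneg_left
      (abs_sum_mul_le_sup'_abs (hp0 i (π i)) (hp1 i (π i)) z) (abs_nonneg γ)
  have hsup := sup'_le_div_one_sub_of_le hγ hbound
  rw [zero_div] at hsup
  have hz0 : z = 0 := funext fun i =>
    abs_nonpos_iff.mp ((le_sup' (fun j => |z j|) (mem_univ i)).trans hsup)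
  exact sub_eq_zero.mp hz0

lemma Tpol_vpi (hp0 : ∀ i a j, 0 ≤ p i a j) (hp1 : ∀ i a, ∑ j, p i a j = 1)
    (hγ : |γ| < 1) (π : X → A) :
    Tpol p r γ π (vpi p r γ π) = vpi p r γ π := by
  set M := (1 : Matrix X X ℝ) - γ • Pmat p π
  have hdet : IsUnit M.det :=
    (Matrix.isUnit_iff_isUnit_det M).mp (isUnit_one_sub_smul_Pmat hp0 hp1 hγ π)
  have hM : M *ᵥ vpi p r γ π = rvec p r π := by
    rw [vpi, Matrix.mulVec_mulVec, Matrix.mul_nonsing_inv M hdet, Matrix.one_mulVec]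
  rw [Matrix.sub_mulVec, Matrix.one_mulVec, Matrix.smul_mulVec] at hM
  rw [Tpol, ← hM, sub_add_cancel]

variable [Fintype A] [Nonempty A]

lemma vpi_le_of_Topt_fixed (hp0 : ∀ i a j, 0 ≤ p i a j) (hp1 : ∀ i a, ∑ j, p i a j = 1)
    (hγ0 : 0 ≤ γ) (hγ1 : γ < 1) {vstar : X → ℝ} (hfix : Topt p r γ vstar = vstar)
    (π : X → A) (i : X) : vpi p r γ π i ≤ vstar i := by
  have hγ : |γ| < 1 := by rwa [abs_of_nonneg hγ0]
  have hbound : ∀ i, (vpi p r γ π - vstar) i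
      ≤ γ * univ.sup' univ_nonempty (vpi p r γ π - vstar) + 0 := by
    intro i
    have hle : Tpol p r γ π vstar i ≤ vstar i := by
      simpa only [hfix] using Tpol_le_Topt p r γ π vstar i
    have := Tpol_sub_le r hp0 hp1 hγ0 π (vpi p r γ π) vstar i
    rw [Tpol_vpi r hp0 hp1 hγ π] at this
    rw [Pi.sub_apply, add_zero]
    linarith
  have hsup := sup'_le_div_one_sub_of_le hγ1 hbound
  rw [zero_div] at hsup
  exact sub_nonpos.mp ((le_sup' _ (mem_univ i)).trans hsup)

lemma sub_vpi_le_of_greedy (hp0 : ∀ i a j, 0 ≤ p i a j) (hp1 : ∀ i a, ∑ j, p i a j = 1)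
    (hγ0 : 0 ≤ γ) (hγ1 : γ < 1) {vstar : X → ℝ} (hfix : Topt p r γ vstar = vstar)
    {u : X → ℝ} {π : X → A} (hπ : Greedy p r γ π u) (i : X) :
    vstar i - vpi p r γ π i ≤ γ / (1 - γ) * spanInf (Topt p r γ u - u) := by
  have hγ : |γ| < 1 := by rwa [abs_of_nonneg hγ0]
  set vp := vpi p r γ π
  set δ := Topt p r γ u - u
  have hδmax : ∀ i, Topt p r γ u i - u i ≤ univ.sup' univ_nonempty δ :=
    fun i => le_sup' δ (mem_univ i)
  have hδmin : ∀ i, univ.inf' univ_nonempty δ ≤ Topt p r γ u i - u i :=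
    fun i => inf'_le δ (mem_univ i)
  have hT : ∀ i,
      Topt p r γ vstar i - Topt p r γ u i ≤ γ * univ.sup' univ_nonempty (vstar - u) :=
    Topt_sub_le r hp0 hp1 hγ0 vstar u
  have hTπ : ∀ i, Topt p r γ u i - vp i ≤ γ * univ.sup' univ_nonempty (u - vp) := by
    intro i
    have := Tpol_sub_le r hp0 hp1 hγ0 π u vp i
    rwa [hπ, Tpol_vpi r hp0 hp1 hγ π] at this
  have hM1 : univ.sup' univ_nonempty (vstar - u) ≤ univ.sup' univ_nonempty δ / (1 - γ) := by
    refine sup'_le_div_one_sub_of_le hγ1 fun i => ?_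
    have := hT i
    rw [hfix] at this
    rw [Pi.sub_apply]
    linarith [hδmax i]
  have hM2 : univ.sup' univ_nonempty (u - vp) ≤ -univ.inf' univ_nonempty δ / (1 - γ) := by
    refine sup'_le_div_one_sub_of_le hγ1 fun i => ?_
    rw [Pi.sub_apply]
    linarith [hδmin i, hTπ i]
  have hsplit : vstar i - vp i
      = (Topt p r γ vstar i - Topt p r γ u i) + (Topt p r γ u i - vp i) := by
    rw [hfix]; ring
  calc vstar i - vp i
      ≤ γ * (univ.sup' univ_nonempty δ / (1 - γ))
          + γ * (-univ.inf' univ_nonempty δ / (1 - γ)) := by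
        rw [hsplit]
        exact add_le_add ((hT i).trans (mul_le_mul_of_nonneg_left hM1 hγ0))
          ((hTπ i).trans (mul_le_mul_of_nonneg_left hM2 hγ0))
    _ = γ / (1 - γ) * spanInf δ := by rw [spanInf]; ring

end PolicyValue

/-- Stopping condition for Exact Value Iteration. -/
theorem exact_VI_stopping
    {X A : Type*} [Fintype X] [Nonempty X] [DecidableEq X] [Fintype A] [Nonempty A]
    (p : X → A → X → ℝ) (r : X → A → X → ℝ) (γ : ℝ)
    (hp0 : ∀ i a j, 0 ≤ p i a j) (hp1 : ∀ i a, ∑ j, p i a j = 1)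
    (hγ0 : 0 < γ) (hγ1 : γ < 1)
    (vstar : X → ℝ) (hfix : Topt p r γ vstar = vstar)
    -- exact value iteration
    (v : ℕ → X → ℝ) (hupd : ∀ k, v (k + 1) = Topt p r γ (v k))
    (k0 : ℕ) (ε : ℝ)
    (hstop : spanInf (v (k0 + 1) - v k0) < (1 - γ) / γ * ε)
    -- `πg` is the greedy policy with respect to `v k0`
    (πg : X → A) (hπg : Greedy p r γ πg (v k0)) :
    linfNorm (vstar - vpi p r γ πg) < ε := by
  have hδ : v (k0 + 1) - v k0 = Topt p r γ (v k0) - v k0 := by rw [hupd]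
  rw [hδ] at hstop
  have hbound : γ / (1 - γ) * spanInf (Topt p r γ (v k0) - v k0) < ε := by
    have h1γ : 0 < 1 - γ := sub_pos.mpr hγ1
    calc γ / (1 - γ) * spanInf (Topt p r γ (v k0) - v k0)
        < γ / (1 - γ) * ((1 - γ) / γ * ε) := mul_lt_mul_of_pos_left hstop (by positivity)
      _ = ε := by field_simp
  refine (sup'_lt_iff _).mpr fun i _ => abs_lt.mpr ⟨?_, ?_⟩
  · have hε : 0 < ε := (mul_nonneg (div_nonneg hγ0.le (sub_pos.mpr hγ1).le)
      (spanInf_nonneg _)).trans_lt hbound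
    have := vpi_le_of_Topt_fixed r hp0 hp1 hγ0.le hγ1 hfix πg i
    rw [Pi.sub_apply]
    linarith
  · rw [Pi.sub_apply]
    exact (sub_vpi_le_of_greedy r hp0 hp1 hγ0.le hγ1 hfix hπg i).trans_lt hbound
end

section
/- Asymptotic performance of Approximate Value Iteration with concentration coefficient: run Approximate Value Iteration v_{k+1} = T v_k + ε_{k+1} with π_k greedy with respect to v_{k−1}. Let ν be a distribution with ν(j) > 0 for all j, C(ν) = max_{i,j,a} p(i,a,j)/ν(j), and p ≥ 1. If the approximation errors are uniformly bounded, ‖ε_k‖_{p,ν} ≤ ε for all k, then limsup_k ‖v_* − v^{π_k}‖_∞ ≤ (2γ·C(ν)^{1/p}/(1−γ)²)·ε. -/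
open Matrix Filter Finset

/-! Everything is controlled by `t_k = max_{i,a} Σ_j p(i,a,j) |v_*(j) - v_k(j)|`
(`maxExpectedAbs p (v_* - v_k)`).
Since `T` is a `γ`-contraction against every transition row, `|v_* - v_{k+1}| ≤ γ t_k + |ε_{k+1}|`
pointwise, and averaging a row against `|ε|` costs at most `C(ν)^{1/p} ‖ε‖_{p,ν}` (Jensen plus
`p(i,a,·) ≤ C(ν) ν`); hence `t_{k+1} ≤ γ t_k + C(ν)^{1/p} ε` and `limsup t_k ≤ C(ν)^{1/p} ε/(1-γ)`.
For `π_{k+1}` greedy with respect to `v_k`, `d = v_* - v^{π_{k+1}} ≥ 0` satisfies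
`d ≤ 2γ t_k + γ P^{π_{k+1}} d`, so the maximum principle for stochastic matrices gives
`‖d‖_∞ ≤ 2γ t_k/(1-γ)`. -/

open Topology

theorem le_pow_mul_add_div_of_le_mul_add {t : ℕ → ℝ} {γ c : ℝ} (hγ0 : 0 ≤ γ) (hγ1 : γ < 1)
    (hc : 0 ≤ c) (h : ∀ k, t (k + 1) ≤ γ * t k + c) (k : ℕ) :
    t k ≤ γ ^ k * t 0 + c / (1 - γ) := by
  have h1γ : 0 < 1 - γ := by linarith
  induction k with
  | zero => simpa using div_nonneg hc h1γ.le
  | succ k ih =>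
    calc t (k + 1) ≤ γ * (γ ^ k * t 0 + c / (1 - γ)) + c :=
          (h k).trans (by gcongr)
      _ = γ ^ (k + 1) * t 0 + c / (1 - γ) := by field_simp; ring

theorem limsup_le_of_succ_le_mul_pow_add {f : ℕ → ℝ} {a b γ : ℝ} (hf : ∀ k, 0 ≤ f k)
    (hγ0 : 0 ≤ γ) (hγ1 : γ < 1) (h : ∀ k, f (k + 1) ≤ a * γ ^ k + b) :
    atTop.limsup f ≤ b := by
  have hg : Tendsto (fun k : ℕ => a * γ ^ k + b) atTop (𝓝 b) := by
    simpa using ((tendsto_pow_atTop_nhds_zero_of_lt_one hγ0 hγ1).const_mul a).add_const b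
  rw [← limsup_nat_add f 1]
  exact (limsup_le_limsup (Eventually.of_forall h)
    (isCoboundedUnder_le_of_le atTop fun k => hf (k + 1)) hg.isBoundedUnder_le).trans_eq
    hg.limsup_eq

section Stochastic

variable {X : Type*} [Fintype X] {P : Matrix X X ℝ}

theorem IsStochastic.le_div_one_sub_of_le (hP : IsStochastic P) {γ c : ℝ} (hγ0 : 0 ≤ γ)
    (hγ1 : γ < 1) {d : X → ℝ} (h : ∀ i, d i ≤ c + γ * (P *ᵥ d) i) (i : X) :
    d i ≤ c / (1 - γ) := by
  have : Nonempty X := ⟨i⟩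
  obtain ⟨m, hm⟩ := Finite.exists_max d
  have hPd : (P *ᵥ d) m ≤ d m :=
    calc (P *ᵥ d) m = ∑ j, P m j * d j := rfl
      _ ≤ ∑ j, P m j * d m := by gcongr with j; exacts [hP.1 m j, hm j]
      _ = d m := by rw [← Finset.sum_mul, hP.2 m, one_mul]
  have hdm : d m ≤ c / (1 - γ) := by
    rw [le_div_iff₀ (by linarith)]
    nlinarith [h m, mul_le_mul_of_nonneg_left hPd hγ0]
  exact (hm i).trans hdm

theorem IsStochastic.isUnit_one_sub_smul [DecidableEq X] (hP : IsStochastic P) {γ : ℝ}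
    (hγ0 : 0 ≤ γ) (hγ1 : γ < 1) : IsUnit (1 - γ • P) := by
  have nonpos_of_mem_ker : ∀ d : X → ℝ, (1 - γ • P) *ᵥ d = 0 → d ≤ 0 := by
    intro d hd i
    rw [Matrix.sub_mulVec, Matrix.one_mulVec, Matrix.smul_mulVec, sub_eq_zero] at hd
    have := hP.le_div_one_sub_of_le hγ0 hγ1 (c := 0) (d := d)
      (fun i => by simpa using (congrFun hd i).le) i
    simpa using this
  rw [← Matrix.mulVec_injective_iff_isUnit]
  intro x y hxy
  have hxy' := nonpos_of_mem_ker (x - y) (by rw [Matrix.mulVec_sub, hxy, sub_self])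
  have hyx' := nonpos_of_mem_ker (y - x) (by rw [Matrix.mulVec_sub, hxy, sub_self])
  exact le_antisymm (sub_nonpos.1 hxy') (sub_nonpos.1 hyx')

end Stochastic

section Norms

variable {X A : Type*} [Fintype X]

theorem wLpNorm_nonneg {pp : ℝ} {μ : X → ℝ} (hμ : ∀ x, 0 ≤ μ x) (u : X → ℝ) :
    0 ≤ wLpNorm pp μ u :=
  Real.rpow_nonneg (Finset.sum_nonneg fun x _ => mul_nonneg (hμ x) (by positivity)) _

theorem linfNorm_nonneg [Nonempty X] (u : X → ℝ) : 0 ≤ linfNorm u :=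
  (abs_nonneg _).trans
    (Finset.le_sup' (fun x => |u x|) (Finset.mem_univ (Classical.arbitrary X)))

variable [Nonempty X] [Fintype A] [Nonempty A] {p : X → A → X → ℝ} {ν : X → ℝ}

theorem le_concCoef_mul (hνpos : ∀ j, 0 < ν j) (i : X) (a : A) (j : X) :
    p i a j ≤ concCoef p ν * ν j :=
  (div_le_iff₀ (hνpos j)).1
    (Finset.le_sup' (fun x : X × A × X => p x.1 x.2.1 x.2.2 / ν x.2.2) (Finset.mem_univ (i, a, j)))

theorem concCoef_nonneg (hp0 : ∀ i a j, 0 ≤ p i a j) (hν0 : ∀ j, 0 ≤ ν j) :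
    0 ≤ concCoef p ν := by
  obtain ⟨x⟩ := ‹Nonempty X›
  obtain ⟨a⟩ := ‹Nonempty A›
  exact (div_nonneg (hp0 x a x) (hν0 x)).trans
    (Finset.le_sup' (fun x : X × A × X => p x.1 x.2.1 x.2.2 / ν x.2.2) (Finset.mem_univ (x, a, x)))

theorem sum_mul_abs_le_concCoef_mul (hp0 : ∀ i a j, 0 ≤ p i a j)
    (hp1 : ∀ i a, ∑ j, p i a j = 1) (hνpos : ∀ j, 0 < ν j) {pp : ℝ} (hpp : 1 ≤ pp)
    (u : X → ℝ) (i : X) (a : A) :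
    ∑ j, p i a j * |u j| ≤ concCoef p ν ^ (1 / pp) * wLpNorm pp ν u := by
  calc ∑ j, p i a j * |u j|
      ≤ (∑ j, p i a j * |u j| ^ pp) ^ (1 / pp) :=
        Real.arith_mean_le_rpow_mean _ _ _ (fun j _ => hp0 i a j) (hp1 i a)
          (fun j _ => abs_nonneg _) hpp
    _ ≤ (∑ j, concCoef p ν * ν j * |u j| ^ pp) ^ (1 / pp) := by
        gcongr with j
        · exact Finset.sum_nonneg fun j _ => mul_nonneg (hp0 i a j) (by positivity)
        · exact le_concCoef_mul hνpos i a j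
    _ = concCoef p ν ^ (1 / pp) * wLpNorm pp ν u := by
        simp_rw [mul_assoc, ← Finset.mul_sum]
        exact Real.mul_rpow (concCoef_nonneg hp0 fun j => (hνpos j).le)
          (Finset.sum_nonneg fun j _ => mul_nonneg (hνpos j).le (by positivity))

end Norms

section Bellman

variable {X A : Type*} [Fintype X] {p r : X → A → X → ℝ} {γ : ℝ}

theorem isStochastic_pmat (hp0 : ∀ i a j, 0 ≤ p i a j) (hp1 : ∀ i a, ∑ j, p i a j = 1)
    (π : X → A) : IsStochastic (Pmat p π) :=
  ⟨fun i j => hp0 i (π i) j, fun i => hp1 i (π i)⟩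

variable (p r γ) in
theorem tpol_apply (π : X → A) (w : X → ℝ) (i : X) :
    Tpol p r γ π w i = ∑ j, p i (π i) j * (r i (π i) j + γ * w j) := by
  simp only [Tpol, rvec, Pmat, Pi.add_apply, Pi.smul_apply, smul_eq_mul, Matrix.mulVec,
    dotProduct, Matrix.of_apply, Finset.mul_sum, ← Finset.sum_add_distrib]
  exact Finset.sum_congr rfl fun j _ => by ring

variable (p r γ) in
theorem tpol_sub_tpol (π : X → A) (w w' : X → ℝ) :
    Tpol p r γ π w - Tpol p r γ π w' = γ • (Pmat p π *ᵥ (w - w')) := by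
  simp only [Tpol, Matrix.mulVec_sub, smul_sub, add_sub_add_left_eq_sub]

theorem tpol_vpi [DecidableEq X] (hp0 : ∀ i a j, 0 ≤ p i a j)
    (hp1 : ∀ i a, ∑ j, p i a j = 1) (hγ0 : 0 ≤ γ) (hγ1 : γ < 1) (π : X → A) :
    Tpol p r γ π (vpi p r γ π) = vpi p r γ π := by
  have hu := (isStochastic_pmat hp0 hp1 π).isUnit_one_sub_smul hγ0 hγ1
  have h : (1 - γ • Pmat p π) *ᵥ vpi p r γ π = rvec p r π := by
    rw [vpi, Matrix.mulVec_mulVec,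
      Matrix.mul_nonsing_inv _ ((Matrix.isUnit_iff_isUnit_det _).1 hu), Matrix.one_mulVec]
  rw [Matrix.sub_mulVec, Matrix.one_mulVec, Matrix.smul_mulVec] at h
  rw [Tpol, ← h, sub_add_cancel]

variable [Fintype A] [Nonempty A]

variable (p r γ) in
theorem tpol_le_topt (π : X → A) (w : X → ℝ) : Tpol p r γ π w ≤ Topt p r γ w := fun i => by
  rw [tpol_apply]
  exact Finset.le_sup' (fun a => ∑ j, p i a j * (r i a j + γ * w j)) (Finset.mem_univ (π i))

theorem topt_sub_topt_le (hγ0 : 0 ≤ γ) {w w' : X → ℝ} {i : X}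
    {b : ℝ} (h : ∀ a, ∑ j, p i a j * (w - w') j ≤ b) :
    Topt p r γ w i - Topt p r γ w' i ≤ γ * b := by
  rw [sub_le_iff_le_add]
  refine Finset.sup'_le _ _ fun a _ => ?_
  have hw' : ∑ j, p i a j * (r i a j + γ * w' j) ≤ Topt p r γ w' i :=
    Finset.le_sup' (fun a => ∑ j, p i a j * (r i a j + γ * w' j)) (Finset.mem_univ a)
  have hdiff : ∑ j, p i a j * (r i a j + γ * w j) - ∑ j, p i a j * (r i a j + γ * w' j)
      = γ * ∑ j, p i a j * (w - w') j := by
    rw [← Finset.sum_sub_distrib, Finset.mul_sum]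
    exact Finset.sum_congr rfl fun j _ => by simp only [Pi.sub_apply]; ring
  nlinarith [mul_le_mul_of_nonneg_left (h a) hγ0]

theorem vpi_le_of_topt_eq [DecidableEq X] (hp0 : ∀ i a j, 0 ≤ p i a j)
    (hp1 : ∀ i a, ∑ j, p i a j = 1) (hγ0 : 0 ≤ γ) (hγ1 : γ < 1) {vstar : X → ℝ}
    (hfix : Topt p r γ vstar = vstar) (π : X → A) : vpi p r γ π ≤ vstar := by
  have hsub := tpol_sub_tpol p r γ π (vpi p r γ π) vstar
  rw [tpol_vpi hp0 hp1 hγ0 hγ1] at hsub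
  have hd : ∀ i, (vpi p r γ π - vstar) i ≤ 0 + γ * (Pmat p π *ᵥ (vpi p r γ π - vstar)) i := by
    intro i
    have hle := tpol_le_topt p r γ π vstar i
    rw [hfix] at hle
    have := congrFun hsub i
    simp only [Pi.sub_apply, Pi.smul_apply, smul_eq_mul] at this ⊢
    linarith
  intro i
  simpa using (isStochastic_pmat hp0 hp1 π).le_div_one_sub_of_le hγ0 hγ1 hd i

end Bellman

section ExpectedAbs

variable {X A : Type*} [Fintype X] [Nonempty X] [Fintype A] [Nonempty A]
  {p r : X → A → X → ℝ} {γ : ℝ}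

noncomputable def maxExpectedAbs (p : X → A → X → ℝ) (u : X → ℝ) : ℝ :=
  Finset.univ.sup' Finset.univ_nonempty fun x : X × A => ∑ j, p x.1 x.2 j * |u j|

theorem sum_mul_abs_le_maxExpectedAbs (u : X → ℝ) (i : X) (a : A) :
    ∑ j, p i a j * |u j| ≤ maxExpectedAbs p u :=
  Finset.le_sup' (fun x : X × A => ∑ j, p x.1 x.2 j * |u j|) (Finset.mem_univ (i, a))

theorem sum_mul_le_maxExpectedAbs (hp0 : ∀ i a j, 0 ≤ p i a j) (u : X → ℝ) (i : X) (a : A) :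
    ∑ j, p i a j * u j ≤ maxExpectedAbs p u :=
  (Finset.sum_le_sum fun j _ => mul_le_mul_of_nonneg_left (le_abs_self _) (hp0 i a j)).trans
    (sum_mul_abs_le_maxExpectedAbs u i a)

theorem maxExpectedAbs_neg (u : X → ℝ) : maxExpectedAbs p (-u) = maxExpectedAbs p u := by
  simp only [maxExpectedAbs, Pi.neg_apply, abs_neg]

theorem maxExpectedAbs_le_concCoef_mul (hp0 : ∀ i a j, 0 ≤ p i a j)
    (hp1 : ∀ i a, ∑ j, p i a j = 1) {ν : X → ℝ} (hνpos : ∀ j, 0 < ν j) {pp : ℝ}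
    (hpp : 1 ≤ pp) (u : X → ℝ) :
    maxExpectedAbs p u ≤ concCoef p ν ^ (1 / pp) * wLpNorm pp ν u :=
  Finset.sup'_le _ _ fun x _ => sum_mul_abs_le_concCoef_mul hp0 hp1 hνpos hpp u x.1 x.2

theorem abs_topt_sub_topt_le (hp0 : ∀ i a j, 0 ≤ p i a j) (hγ0 : 0 ≤ γ) (w w' : X → ℝ)
    (i : X) : |Topt p r γ w i - Topt p r γ w' i| ≤ γ * maxExpectedAbs p (w - w') := by
  rw [abs_sub_le_iff]
  constructor
  · exact topt_sub_topt_le hγ0 fun a => sum_mul_le_maxExpectedAbs hp0 _ i a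
  · refine topt_sub_topt_le hγ0 fun a => ?_
    rw [← neg_sub w w', ← maxExpectedAbs_neg]
    exact sum_mul_le_maxExpectedAbs hp0 _ i a

theorem maxExpectedAbs_sub_topt_add_le (hp0 : ∀ i a j, 0 ≤ p i a j)
    (hp1 : ∀ i a, ∑ j, p i a j = 1) (hγ0 : 0 ≤ γ) {vstar : X → ℝ}
    (hfix : Topt p r γ vstar = vstar) (w e : X → ℝ) :
    maxExpectedAbs p (vstar - (Topt p r γ w + e)) ≤
      γ * maxExpectedAbs p (vstar - w) + maxExpectedAbs p e := by
  set t := maxExpectedAbs p (vstar - w)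
  have hpt : ∀ j, |(vstar - (Topt p r γ w + e)) j| ≤ γ * t + |e j| := fun j =>
    calc |(vstar - (Topt p r γ w + e)) j|
        = |(Topt p r γ vstar j - Topt p r γ w j) - e j| := by
          rw [hfix, Pi.sub_apply, Pi.add_apply, sub_add_eq_sub_sub]
      _ ≤ |Topt p r γ vstar j - Topt p r γ w j| + |e j| := abs_sub _ _
      _ ≤ γ * t + |e j| := by gcongr; exact abs_topt_sub_topt_le hp0 hγ0 vstar w j
  refine Finset.sup'_le _ _ fun x _ => ?_
  calc ∑ j, p x.1 x.2 j * |(vstar - (Topt p r γ w + e)) j|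
      ≤ ∑ j, p x.1 x.2 j * (γ * t + |e j|) := by
        gcongr with j
        exacts [hp0 _ _ j, hpt j]
    _ = γ * t + ∑ j, p x.1 x.2 j * |e j| := by
        simp_rw [mul_add, Finset.sum_add_distrib, ← Finset.sum_mul, hp1, one_mul]
    _ ≤ γ * t + maxExpectedAbs p e := by
        gcongr
        exact sum_mul_abs_le_maxExpectedAbs e x.1 x.2

theorem linfNorm_sub_vpi_le_of_greedy [DecidableEq X] (hp0 : ∀ i a j, 0 ≤ p i a j)
    (hp1 : ∀ i a, ∑ j, p i a j = 1) (hγ0 : 0 ≤ γ) (hγ1 : γ < 1) {vstar : X → ℝ}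
    (hfix : Topt p r γ vstar = vstar) {π : X → A} {w : X → ℝ} (hπ : Greedy p r γ π w) :
    linfNorm (vstar - vpi p r γ π) ≤ 2 * γ * maxExpectedAbs p (vstar - w) / (1 - γ) := by
  set d := vstar - vpi p r γ π with hd_def
  have hd : ∀ i, d i ≤ 2 * γ * maxExpectedAbs p (vstar - w) + γ * (Pmat p π *ᵥ d) i := by
    intro i
    have hopt := le_of_abs_le (abs_topt_sub_topt_le (r := r) hp0 hγ0 vstar w i)
    rw [hfix] at hopt
    have hpol := congrFun (tpol_sub_tpol p r γ π w (vpi p r γ π)) i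
    rw [tpol_vpi hp0 hp1 hγ0 hγ1, hπ, show w - vpi p r γ π = -(vstar - w) + d by
      rw [hd_def]; abel, Matrix.mulVec_add] at hpol
    have hP : (Pmat p π *ᵥ -(vstar - w)) i ≤ maxExpectedAbs p (-(vstar - w)) :=
      sum_mul_le_maxExpectedAbs hp0 _ i (π i)
    rw [maxExpectedAbs_neg] at hP
    simp only [Pi.sub_apply, Pi.add_apply, Pi.smul_apply, smul_eq_mul] at hpol
    simp only [hd_def, Pi.sub_apply]
    nlinarith [mul_le_mul_of_nonneg_left hP hγ0]
  have hd0 : 0 ≤ d := sub_nonneg.2 (vpi_le_of_topt_eq hp0 hp1 hγ0 hγ1 hfix π)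
  refine Finset.sup'_le _ _ fun i _ => ?_
  rw [abs_of_nonneg (hd0 i)]
  exact (isStochastic_pmat hp0 hp1 π).le_div_one_sub_of_le hγ0 hγ1 hd i

end ExpectedAbs

theorem approx_VI_concentration_general
    {X A : Type*} [Fintype X] [Nonempty X] [DecidableEq X] [Fintype A] [Nonempty A]
    (p : X → A → X → ℝ) (r : X → A → X → ℝ) (γ : ℝ)
    (hp0 : ∀ i a j, 0 ≤ p i a j) (hp1 : ∀ i a, ∑ j, p i a j = 1)
    (hγ0 : 0 < γ) (hγ1 : γ < 1)
    (vstar : X → ℝ) (hfix : Topt p r γ vstar = vstar)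
    -- approximate value iteration with errors ε, `π (k+1)` greedy w.r.t. `v k`
    (v : ℕ → X → ℝ) (π : ℕ → X → A) (ε : ℕ → X → ℝ)
    (hgreedy : ∀ k, Greedy p r γ (π (k + 1)) (v k))
    (hupd : ∀ k, v (k + 1) = Topt p r γ (v k) + ε (k + 1))
    (ν : X → ℝ) (hνpos : ∀ j, 0 < ν j)
    (pp : ℝ) (hpp : 1 ≤ pp)
    -- uniformly bounded approximation errors
    (εb : ℝ) (hεb : ∀ k, wLpNorm pp ν (ε k) ≤ εb) :
    Filter.atTop.limsup (fun k => linfNorm (vstar - vpi p r γ (π k))) ≤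
      2 * γ * concCoef p ν ^ (1 / pp) / (1 - γ) ^ 2 * εb := by
  set C := concCoef p ν ^ (1 / pp)
  set t := fun k => maxExpectedAbs p (vstar - v k)
  have hC : 0 ≤ C := Real.rpow_nonneg (concCoef_nonneg hp0 fun j => (hνpos j).le) _
  have hεb0 : 0 ≤ εb := (wLpNorm_nonneg (fun j => (hνpos j).le) (ε 0)).trans (hεb 0)
  have hrec : ∀ k, t (k + 1) ≤ γ * t k + C * εb := fun k =>
    calc t (k + 1) ≤ γ * t k + maxExpectedAbs p (ε (k + 1)) := by
          simp only [t, hupd k]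
          exact maxExpectedAbs_sub_topt_add_le hp0 hp1 hγ0.le hfix (v k) (ε (k + 1))
      _ ≤ γ * t k + C * εb := by
          gcongr
          exact (maxExpectedAbs_le_concCoef_mul hp0 hp1 hνpos hpp _).trans
            (mul_le_mul_of_nonneg_left (hεb _) hC)
  have hgeo := le_pow_mul_add_div_of_le_mul_add hγ0.le hγ1 (mul_nonneg hC hεb0) hrec
  refine limsup_le_of_succ_le_mul_pow_add (a := 2 * γ * t 0 / (1 - γ))
    (fun k => linfNorm_nonneg _) hγ0.le hγ1 fun k => ?_
  have h1γ : 1 - γ ≠ 0 := by linarith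
  calc linfNorm (vstar - vpi p r γ (π (k + 1))) ≤ 2 * γ * t k / (1 - γ) :=
        linfNorm_sub_vpi_le_of_greedy hp0 hp1 hγ0.le hγ1 hfix (hgreedy k)
    _ ≤ 2 * γ * (γ ^ k * t 0 + C * εb / (1 - γ)) / (1 - γ) := by
        gcongr
        exact hgeo k
    _ = 2 * γ * t 0 / (1 - γ) * γ ^ k + 2 * γ * C / (1 - γ) ^ 2 * εb := by
        field_simp

/-- Asymptotic performance of Approximate Value Iteration with concentration coefficient. -/
theorem approx_VI_concentration
    {X A : Type*} [Fintype X] [Nonempty X] [DecidableEq X] [Fintype A] [Nonempty A]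
    (p : X → A → X → ℝ) (r : X → A → X → ℝ) (γ : ℝ)
    (hp0 : ∀ i a j, 0 ≤ p i a j) (hp1 : ∀ i a, ∑ j, p i a j = 1)
    (hγ0 : 0 < γ) (hγ1 : γ < 1)
    (vstar : X → ℝ) (hfix : Topt p r γ vstar = vstar)
    -- approximate value iteration with errors ε, `π (k+1)` greedy w.r.t. `v k`
    (v : ℕ → X → ℝ) (π : ℕ → X → A) (ε : ℕ → X → ℝ)
    (hgreedy : ∀ k, Greedy p r γ (π (k + 1)) (v k))
    (hupd : ∀ k, v (k + 1) = Topt p r γ (v k) + ε (k + 1))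
    (ν : X → ℝ) (hν : IsDistribution ν) (hνpos : ∀ j, 0 < ν j)
    (pp : ℝ) (hpp : 1 ≤ pp)
    -- uniformly bounded approximation errors
    (εb : ℝ) (hεb : ∀ k, wLpNorm pp ν (ε k) ≤ εb) :
    Filter.atTop.limsup (fun k => linfNorm (vstar - vpi p r γ (π k))) ≤
      2 * γ * concCoef p ν ^ (1 / pp) / (1 - γ) ^ 2 * εb :=
  approx_VI_concentration_general p r γ hp0 hp1 hγ0 hγ1 vstar hfix v π ε hgreedy hupd ν hνpos pp hpp
    εb hεb
end
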